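/- Let k be a field, m ≥ 1 an integer, V the k-vector space with basis v_1, …, v_m, V^0 = k and V^n = V^{⊗n} for n ≥ 1. Define δ^0(1) = Σ_{k=1}^m v_k and, for n ≥ 1, δ^n(v_{i_1} ⊗ ⋯ ⊗ v_{i_n}) = Σ_{j=0}^{n} (−1)^j Σ_{k=1}^{m} v_{i_1} ⊗ ⋯ ⊗ v_{i_j} ⊗ v_k ⊗ v_{i_{j+1}} ⊗ ⋯ ⊗ v_{i_n} (the new factor v_k inserted after the first j factors, with sign (−1)^j). Then δ^{n+1} ∘ δ^n = 0 for all n ≥ 0 and the resulting complex 0 → k → V → V^{⊗2} → V^{⊗3} → ⋯ is exact in every degree. -/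
import Mathlib

lemma succAbove_comp {n : ℕ} (j' : Fin (n+2)) (i : Fin (n+1)) (h : (j' : ℕ) ≤ (i : ℕ)) (s : Fin n) :
    j'.succAbove (i.succAbove s) =
      i.succ.succAbove ((⟨(j' : ℕ), by omega⟩ : Fin (n+1)).succAbove s) := by
  ext
  dsimp [Fin.succAbove]
  split_ifs <;> simp_all [Fin.lt_def, Fin.le_def] <;> omega

lemma insertNth_insertNth' {n m' : ℕ} (w : Fin n → Fin m') (i : Fin (n+1)) (j' : Fin (n+2))
    (h : (j' : ℕ) ≤ (i : ℕ)) (a b : Fin m') :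
    Fin.insertNth j' b (Fin.insertNth i a w) =
      Fin.insertNth (α := fun _ => Fin m') i.succ a (Fin.insertNth (α := fun _ => Fin m') (⟨(j' : ℕ), by omega⟩ : Fin (n+1)) b w) := by
  rw [Fin.insertNth_eq_iff]
  constructor
  · have h1 : i.succ.succAbove (⟨(j' : ℕ), by omega⟩ : Fin (n+1)) = j' := by
      rw [Fin.succAbove_succ_of_le _ _ (by simp [Fin.le_def]; omega)]
      ext; simp
    have h2 := Fin.insertNth_apply_succAbove (α := fun _ => Fin m') i.succ a
      (Fin.insertNth (α := fun _ => Fin m') (⟨(j' : ℕ), by omega⟩ : Fin (n+1)) b w)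
      (⟨(j' : ℕ), by omega⟩ : Fin (n+1))
    simp only [h1] at h2
    rw [h2, Fin.insertNth_apply_same]
  · funext t
    simp only [Fin.removeNth]
    induction t using Fin.succAboveCases with
    | i => exact i
    | x =>
      have h2 : j'.succAbove i = i.succ := by
        rw [Fin.succAbove_of_le_castSucc _ _ (by simp [Fin.le_def]; omega)]
      rw [Fin.insertNth_apply_same, h2, Fin.insertNth_apply_same]
    | p s =>
      rw [Fin.insertNth_apply_succAbove, succAbove_comp j' i h s,
        Fin.insertNth_apply_succAbove, Fin.insertNth_apply_succAbove]

lemma insertNth_succ' {n m' : ℕ} (w : Fin (n+1) → Fin m') (t : Fin (n+1)) (a : Fin m') :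
    Fin.insertNth t.succ a w =
      Fin.cons (α := fun _ => Fin m') (w 0) (Fin.insertNth (α := fun _ => Fin m') t a (Fin.tail w)) := by
  rw [Fin.insertNth_eq_iff]
  constructor
  · rw [Fin.cons_succ, Fin.insertNth_apply_same]
  · funext s
    simp only [Fin.removeNth]
    induction s using Fin.cases with
    | zero => simp [Fin.succ_succAbove_zero]
    | succ r =>
      simp only [Fin.succ_succAbove_succ, Fin.cons_succ, Fin.insertNth_apply_succAbove,
        Fin.tail]



/-! **STATEMENT 8.**  Let `k` be a field, `m ≥ 1`, and `V` the `k`-vector space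
with basis `v_1, …, v_m`.  We model the tensor power `V^{⊗n}` as the free
`k`-module on words of length `n` in the letters `1, …, m`, i.e. on
`Fin n → Fin m` (so `V^0 = k`, via the empty word). -/

/-- The `n`-th tensor power `V^{⊗n}` of the `m`-dimensional space `V`, modeled
as the free `k`-module on the basis of words `Fin n → Fin m` (the word
`(i_1, …, i_n)` corresponds to `v_{i_1} ⊗ ⋯ ⊗ v_{i_n}`). -/
abbrev TPow (k : Type) [Field k] (m n : ℕ) : Type := (Fin n → Fin m) →₀ k

open scoped Classical

/-- The differential `δ^n : V^{⊗n} → V^{⊗(n+1)}`,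
`δ^n(v_{i_1} ⊗ ⋯ ⊗ v_{i_n}) = Σ_{j=0}^{n} (−1)^j Σ_{a=1}^{m}
v_{i_1} ⊗ ⋯ ⊗ v_{i_j} ⊗ v_a ⊗ v_{i_{j+1}} ⊗ ⋯ ⊗ v_{i_n}`
(the new factor inserted after the first `j` factors, with sign `(−1)^j`);
for `n = 0` this is `δ^0(1) = Σ_a v_a`. -/
noncomputable def wordDelta (k : Type) [Field k] (m n : ℕ) :
    TPow k m n →ₗ[k] TPow k m (n + 1) :=
  Finsupp.lsum k (fun w => LinearMap.toSpanSingleton k (TPow k m (n + 1))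
    (∑ j : Fin (n + 1), ∑ a : Fin m,
      ((-1 : k) ^ (j : ℕ)) • Finsupp.single (j.insertNth a w) 1))

lemma delta_single (k : Type) [Field k] (m n : ℕ) (w : Fin n → Fin m) (c : k) :
    wordDelta k m n (Finsupp.single w c) =
      c • ∑ j : Fin (n + 1), ∑ a : Fin m,
        ((-1 : k) ^ (j : ℕ)) • Finsupp.single (j.insertNth a w) (1 : k) := by
  simp [wordDelta, LinearMap.toSpanSingleton_apply]

set_option maxHeartbeats 1000000 in
lemma delta_delta (k : Type) [Field k] (m n : ℕ) (w : Fin n → Fin m) :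
    wordDelta k m (n + 1) (wordDelta k m n (Finsupp.single w 1)) = 0 := by
  rw [delta_single, one_smul, map_sum]
  simp only [map_sum, map_smul, delta_single, one_smul, one_mul, Finset.smul_sum, smul_smul]
  have key : ∑ p : (Fin (n+1) × Fin m) × (Fin (n+2) × Fin m),
      ((-1:k)^(p.1.1:ℕ) * (-1:k)^(p.2.1:ℕ)) •
        Finsupp.single (Fin.insertNth (α := fun _ => Fin m) p.2.1 p.2.2 (Fin.insertNth (α := fun _ => Fin m) p.1.1 p.1.2 w)) (1:k) = 0 := by
    set F : (Fin (n+1) × Fin m) × (Fin (n+2) × Fin m) → TPow k m (n+2) :=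
      fun p => ((-1:k)^(p.1.1:ℕ) * (-1:k)^(p.2.1:ℕ)) •
        Finsupp.single (Fin.insertNth (α := fun _ => Fin m) p.2.1 p.2.2
          (Fin.insertNth (α := fun _ => Fin m) p.1.1 p.1.2 w)) (1:k) with hF
    rw [← Finset.sum_filter_add_sum_filter_not Finset.univ
      (fun p => (p.2.1 : ℕ) ≤ (p.1.1 : ℕ)) F]
    have hswap : ∑ p ∈ Finset.univ.filter
          (fun p : (Fin (n+1) × Fin m) × (Fin (n+2) × Fin m) => (p.2.1 : ℕ) ≤ (p.1.1 : ℕ)), F p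
        = ∑ p ∈ Finset.univ.filter
          (fun p : (Fin (n+1) × Fin m) × (Fin (n+2) × Fin m) => ¬ (p.2.1 : ℕ) ≤ (p.1.1 : ℕ)),
          (- F p) := by
      refine Finset.sum_nbij'
        (i := fun p => ((⟨min (p.2.1 : ℕ) n, by omega⟩, p.2.2), (p.1.1.succ, p.1.2)))
        (j := fun q => ((⟨(q.2.1 : ℕ) - 1, by omega⟩, q.2.2), ((⟨(q.1.1 : ℕ), by omega⟩ : Fin (n+2)), q.1.2)))
        ?_ ?_ ?_ ?_ ?_
      · rintro ⟨⟨j, a⟩, ⟨j', b⟩⟩ hp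
        simp only [Finset.mem_filter, Finset.mem_univ, true_and] at hp ⊢
        simp only [Fin.val_succ]
        omega
      · rintro ⟨⟨j, a⟩, ⟨j', b⟩⟩ hp
        simp only [Finset.mem_filter, Finset.mem_univ, true_and] at hp ⊢
        omega
      · rintro ⟨⟨j, a⟩, ⟨j', b⟩⟩ hp
        simp only [Finset.mem_filter, Finset.mem_univ, true_and] at hp
        have hj : (j : ℕ) ≤ n := by omega
        ext <;> simp <;> omega
      · rintro ⟨⟨j, a⟩, ⟨j', b⟩⟩ hp
        simp only [Finset.mem_filter, Finset.mem_univ, true_and] at hp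
        ext <;> simp <;> omega
      · rintro ⟨⟨j, a⟩, ⟨j', b⟩⟩ hp
        simp only [Finset.mem_filter, Finset.mem_univ, true_and] at hp
        have hmin : (⟨min (j' : ℕ) n, by omega⟩ : Fin (n+1)) = ⟨(j' : ℕ), by omega⟩ := by
          ext; simp; omega
        simp only [hF, hmin]
        rw [insertNth_insertNth' w j j' hp a b]
        simp only [Fin.val_succ, pow_succ]
        module
    rw [hswap]
    simp
  simpa only [Fintype.sum_prod_type] using key

noncomputable def hmap (k : Type) [Field k] (m : ℕ) (hm : 1 ≤ m) (n : ℕ) :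
    TPow k m (n + 1) →ₗ[k] TPow k m n :=
  Finsupp.lsum k fun w => LinearMap.toSpanSingleton k (TPow k m n)
    (if w 0 = (⟨0, hm⟩ : Fin m) then Finsupp.single (Fin.tail w) 1 else 0)

lemma hmap_single (k : Type) [Field k] (m : ℕ) (hm : 1 ≤ m) (n : ℕ)
    (w : Fin (n + 1) → Fin m) (c : k) :
    hmap k m hm n (Finsupp.single w c) =
      c • (if w 0 = (⟨0, hm⟩ : Fin m) then Finsupp.single (Fin.tail w) (1 : k) else 0) := by
  simp [hmap, LinearMap.toSpanSingleton_apply]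

lemma homotopy_single (k : Type) [Field k] (m : ℕ) (hm : 1 ≤ m) (n : ℕ)
    (w : Fin (n + 1) → Fin m) :
    hmap k m hm (n + 1) (wordDelta k m (n + 1) (Finsupp.single w 1))
      + wordDelta k m n (hmap k m hm n (Finsupp.single w 1)) = Finsupp.single w 1 := by
  rw [delta_single, one_smul, map_sum, hmap_single, one_smul]
  simp only [map_sum, map_smul, hmap_single, one_smul]
  rw [Fin.sum_univ_succ]
  have h0 : ∀ a : Fin m, Fin.insertNth (α := fun _ => Fin m) (0 : Fin (n + 2)) a w
      = Fin.cons (α := fun _ => Fin m) a w := fun a => Fin.insertNth_zero' a w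
  have hs : ∀ (t : Fin (n + 1)) (a : Fin m),
      Fin.insertNth t.succ a w
        = Fin.cons (α := fun _ => Fin m) (w 0)
            (Fin.insertNth (α := fun _ => Fin m) t a (Fin.tail w)) := fun t a =>
    insertNth_succ' w t a
  simp only [h0, hs, Fin.cons_zero, Fin.tail_cons, Fin.val_zero, pow_zero, one_smul,
    Fin.val_succ, pow_succ]
  rw [Finset.sum_ite_eq' Finset.univ (⟨0, hm⟩ : Fin m)
    (fun _ => Finsupp.single w (1 : k))]
  simp only [Finset.mem_univ, if_true]
  by_cases hw : w 0 = (⟨0, hm⟩ : Fin m)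
  · simp only [hw, if_true, delta_single, one_smul, mul_neg_one, neg_smul,
      Finset.sum_neg_distrib]
    abel
  · simp [hw]

lemma hmap_delta_zero (k : Type) [Field k] (m : ℕ) (hm : 1 ≤ m) (x : TPow k m 0) :
    hmap k m hm 0 (wordDelta k m 0 x) = x := by
  have h : (hmap k m hm 0).comp (wordDelta k m 0) = LinearMap.id := by
    apply Finsupp.lhom_ext
    intro w c
    have h0 : ∀ a : Fin m, Fin.insertNth (α := fun _ => Fin m) (0 : Fin 1) a w
        = Fin.cons (α := fun _ => Fin m) a w := fun a => Fin.insertNth_zero' a w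
    simp only [LinearMap.comp_apply, LinearMap.id_apply, delta_single, map_smul, map_sum,
      Fin.sum_univ_succ, Fin.sum_univ_zero, add_zero, Fin.val_zero, pow_zero, one_smul, h0,
      hmap_single, Fin.cons_zero, Fin.tail_cons]
    rw [Finset.sum_ite_eq' Finset.univ (⟨0, hm⟩ : Fin m) (fun _ => Finsupp.single w (1 : k))]
    simp [Finsupp.smul_single]
  calc hmap k m hm 0 (wordDelta k m 0 x) = ((hmap k m hm 0).comp (wordDelta k m 0)) x := rfl
    _ = x := by rw [h]; rfl

lemma homotopy_apply (k : Type) [Field k] (m : ℕ) (hm : 1 ≤ m) (n : ℕ)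
    (x : TPow k m (n + 1)) :
    hmap k m hm (n + 1) (wordDelta k m (n + 1) x) + wordDelta k m n (hmap k m hm n x) = x := by
  have h : (hmap k m hm (n + 1)).comp (wordDelta k m (n + 1))
      + (wordDelta k m n).comp (hmap k m hm n) = LinearMap.id := by
    apply Finsupp.lhom_ext
    intro w c
    have hc : (Finsupp.single w c : TPow k m (n + 1)) = c • Finsupp.single w 1 := by
      simp [Finsupp.smul_single]
    rw [hc]
    simp only [map_smul, LinearMap.add_apply, LinearMap.comp_apply, LinearMap.id_apply,
      ← smul_add]
    rw [homotopy_single k m hm n w]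
  have := LinearMap.congr_fun h x
  simpa using this


/-- **STATEMENT 8.** `δ^{n+1} ∘ δ^n = 0` for all `n ≥ 0`, and the resulting
complex `0 → k → V → V^{⊗2} → V^{⊗3} → ⋯` is exact in every degree: the kernel
of `δ^0 : k → V` is zero, and every cocycle in `V^{⊗(n+1)}` is a coboundary. -/
theorem wordComplex_acyclic (k : Type) [Field k] (m : ℕ) (hm : 1 ≤ m) :
    (∀ n : ℕ, (wordDelta k m (n + 1)).comp (wordDelta k m n) = 0)
    ∧ (∀ x : TPow k m 0, wordDelta k m 0 x = 0 → x = 0)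
    ∧ (∀ (n : ℕ) (x : TPow k m (n + 1)), wordDelta k m (n + 1) x = 0 →
        ∃ y : TPow k m n, wordDelta k m n y = x) := by
  refine ⟨fun n => ?_, fun x hx => ?_, fun n x hx => ?_⟩
  · apply Finsupp.lhom_ext
    intro w c
    have hc : (Finsupp.single w c : TPow k m n) = c • Finsupp.single w 1 := by
      simp [Finsupp.smul_single]
    simp only [LinearMap.comp_apply, LinearMap.zero_apply, hc, map_smul, delta_delta,
      smul_zero]
  · have := hmap_delta_zero k m hm x
    rw [hx, map_zero] at this
    exact this.symm
  · refine ⟨hmap k m hm n x, ?_⟩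
    have := homotopy_apply k m hm n x
    rw [hx, map_zero, zero_add] at this
    exact this
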